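/- arXiv:1305.0057 — 3 statements merged into one kernel-verified Lean document; each statement's English description precedes it below -/
import Mathlib

section
/- Let Φ be an irreducible reduced root system with base Π, J ⊆ Π, π the projection modulo ⟨Π∖J⟩. Let ã be the highest root of Φ and a₁, …, a_n ∈ Φ⁺ a sequence of positive roots with π(a_i) ≠ 0 such that each difference ã − a₁ − ⋯ − a_i is a root, and b = ã − a₁ − ⋯ − a_n is a Π-minimal root in π⁻¹(π(b)) with π(b) ≠ 0. Then for any root a₀ with π(a₀) = π(ã) in the same irreducible component of Φ as ã, there exist positive roots a'_i with π(a'_i) = π(a_i) such that a₀ − a'₁ − ⋯ − a'_n = b and every partial difference a₀ − a'₁ − ⋯ − a'_i is a root. -/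
open scoped RealInnerProductSpace

/-- A reduced root system `Φ` with a fixed base (system of simple roots) `base`
in a real inner product space. -/
structure RootSystemData (V : Type) [NormedAddCommGroup V] [InnerProductSpace ℝ V] where
  Φ : Set V
  base : Finset V
  finite : Φ.Finite
  zero_notMem : (0:V) ∉ Φ
  neg_mem : ∀ a ∈ Φ, -a ∈ Φ
  reduced : ∀ a ∈ Φ, ∀ t : ℝ, t • a ∈ Φ → t = 1 ∨ t = -1
  reflect_mem : ∀ a ∈ Φ, ∀ b ∈ Φ, b - (2 * (inner ℝ a b : ℝ) / (inner ℝ a a : ℝ)) • a ∈ Φ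
  cartan_int : ∀ a ∈ Φ, ∀ b ∈ Φ, ∃ n : ℤ, 2 * (inner ℝ a b : ℝ) / (inner ℝ a a : ℝ) = (n : ℝ)
  base_sub : ↑base ⊆ Φ
  base_indep : LinearIndependent ℝ (fun b : base => (b : V))
  base_gen : ∀ a ∈ Φ,
    (∃ c : V → ℕ, a = ∑ b ∈ base, c b • b) ∨ (∃ c : V → ℕ, -a = ∑ b ∈ base, c b • b)

namespace RootSystemData

variable {V : Type} [NormedAddCommGroup V] [InnerProductSpace ℝ V] (RS : RootSystemData V)

/-- `a` is a nonnegative integral combination of the simple roots. -/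
def IsPos (a : V) : Prop := ∃ c : V → ℕ, a = ∑ b ∈ RS.base, c b • b

/-- The quotient space `V / ⟨Π ∖ J⟩`, ambient space of the relative roots. -/
abbrev Qspace (J : Finset V) : Type :=
  V ⧸ Submodule.span ℝ ((RS.base : Set V) \ (J : Set V))

/-- The canonical projection `π : V → V / ⟨Π ∖ J⟩`. -/
def proj (J : Finset V) : V →ₗ[ℝ] RS.Qspace J :=
  Submodule.mkQ _

/-- The set of relative roots `Φ_J = π(Φ) ∖ {0}`. -/
def relRoots (J : Finset V) : Set (RS.Qspace J) := (RS.proj J '' RS.Φ) \ {0}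

/-- `β` is a simple relative root: a nonzero image of a simple root in `J`. -/
def IsSimpleRel (J : Finset V) (β : RS.Qspace J) : Prop :=
  β ≠ 0 ∧ ∃ b ∈ J, β = RS.proj J b

/-- `β` is a positive relative root: a relative root that is a nonnegative
integral combination of the simple relative roots. -/
def IsPosRel (J : Finset V) (β : RS.Qspace J) : Prop :=
  β ∈ RS.relRoots J ∧ ∃ c : V → ℕ, β = ∑ b ∈ J, c b • RS.proj J b

/-- `a` is maximal in `S` with respect to the base `Π`. -/
def IsMaximalIn (S : Set V) (a : V) : Prop := a ∈ S ∧ ∀ b ∈ RS.base, a + b ∉ S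

/-- `a` is minimal in `S` with respect to the base `Π`. -/
def IsMinimalIn (S : Set V) (a : V) : Prop := a ∈ S ∧ ∀ b ∈ RS.base, a - b ∉ S

/-- `a` is the highest root: every root is obtained from it by subtracting a
nonnegative combination of simple roots. -/
def IsHighest (a : V) : Prop :=
  a ∈ RS.Φ ∧ ∀ b ∈ RS.Φ, ∃ c : V → ℕ, a - b = ∑ x ∈ RS.base, c x • x

/-- `S` is an irreducible component of `Φ`: a nonempty subset orthogonal to its
complement admitting no further nontrivial orthogonal splitting. -/
def IsComponent (S : Set V) : Prop :=
  S ⊆ RS.Φ ∧ S.Nonempty ∧ (∀ a ∈ S, ∀ b ∈ RS.Φ \ S, (inner ℝ a b : ℝ) = 0) ∧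
    ∀ T ⊆ S, T.Nonempty → (∀ a ∈ T, ∀ b ∈ RS.Φ \ T, (inner ℝ a b : ℝ) = 0) → T = S

/-- The root system is irreducible. -/
def Irred : Prop := RS.IsComponent RS.Φ

end RootSystemData

/-!
Since `ã` is the highest root and `π a₀ = π ã`, the difference `ã - a₀` is a sum of simple roots
outside `J`. The roots from which a descent to `b` as in the conclusion starts are closed under
subtracting such a simple root `c` whenever the result is still a root: multiples of `c` can be
pushed through the steps of a descent, because `c`-strings are unbroken and a `c`-string through a
sum of two roots splits between the summands. The shift is used up before reaching `b`, since
`b - c` is not a root by minimality of `b`, and shifting by multiples of `c` changes neither `π`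
nor the positivity of the steps. Peeling the simple roots off `ã - a₀` one at a time then leads
from `ã` to `a₀`.
-/

open Finset

theorem exists_mem_inner_multiset_sum_pos {V : Type*} [NormedAddCommGroup V]
    [InnerProductSpace ℝ V] {l : Multiset V} (hl : l.sum ≠ 0) : ∃ e ∈ l, 0 < ⟪e, l.sum⟫ := by
  by_contra! h
  have hsum : ⟪l.sum, l.sum⟫ = (l.map fun e => ⟪e, l.sum⟫).sum :=
    map_multiset_sum (innerₗ V |>.flip l.sum) l
  have : ⟪l.sum, l.sum⟫ ≤ 0 := by
    rw [hsum]; simpa using Multiset.sum_map_le_sum_map _ (fun _ => (0 : ℝ)) h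
  exact hl (real_inner_self_nonpos.1 this)

namespace RootSystemData

variable {V : Type} [NormedAddCommGroup V] [InnerProductSpace ℝ V] (RS : RootSystemData V)

theorem ne_zero_of_mem {a : V} (ha : a ∈ RS.Φ) : a ≠ 0 :=
  fun h => RS.zero_notMem (h ▸ ha)

theorem eq_one_or_neg_one_of_zsmul_mem {c : V} (hc : c ∈ RS.Φ) {m : ℤ} (h : m • c ∈ RS.Φ) :
    m = 1 ∨ m = -1 := by
  exact_mod_cast RS.reduced c hc m (by rwa [Int.cast_smul_eq_zsmul])

theorem eq_one_of_nsmul_mem {c : V} (hc : c ∈ RS.Φ) {k : ℕ} (h : k • c ∈ RS.Φ) : k = 1 := by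
  have := RS.eq_one_or_neg_one_of_zsmul_mem hc (m := k) (by rwa [natCast_zsmul])
  omega

/-- If both Cartan integers of `a, b` were at least `2`, then `‖a - b‖² ≤ 0`; a Cartan integer
equal to `1` makes the reflection of one root in the other equal to `±(a - b)`. -/
theorem sub_mem_of_inner_pos {a b : V} (ha : a ∈ RS.Φ) (hb : b ∈ RS.Φ) (hab : a ≠ b)
    (hpos : 0 < ⟪a, b⟫) : a - b ∈ RS.Φ := by
  have haa : 0 < ⟪a, a⟫ := real_inner_self_pos.2 (RS.ne_zero_of_mem ha)
  have hbb : 0 < ⟪b, b⟫ := real_inner_self_pos.2 (RS.ne_zero_of_mem hb)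
  obtain ⟨q, hq⟩ := RS.cartan_int a ha b hb
  obtain ⟨p, hp⟩ := RS.cartan_int b hb a ha
  rw [real_inner_comm] at hp
  have hq0 : 0 < q := by exact_mod_cast hq ▸ (by positivity : (0 : ℝ) < 2 * ⟪a, b⟫ / ⟪a, a⟫)
  have hp0 : 0 < p := by exact_mod_cast hp ▸ (by positivity : (0 : ℝ) < 2 * ⟪a, b⟫ / ⟪b, b⟫)
  have hone : q = 1 ∨ p = 1 := by
    by_contra! h
    have hq2 : (2 : ℝ) ≤ q := by exact_mod_cast (show 2 ≤ q by omega)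
    have hp2 : (2 : ℝ) ≤ p := by exact_mod_cast (show 2 ≤ p by omega)
    rw [← hq, le_div_iff₀ haa] at hq2
    rw [← hp, le_div_iff₀ hbb] at hp2
    have : ⟪a - b, a - b⟫ ≤ 0 := by rw [inner_sub_sub_self, real_inner_comm a b]; linarith
    exact hab (sub_eq_zero.1 (real_inner_self_nonpos.1 this))
  rcases hone with h | h
  · have := RS.reflect_mem a ha b hb
    rw [hq, h, Int.cast_one, one_smul] at this
    simpa using RS.neg_mem _ this
  · have := RS.reflect_mem b hb a ha
    rwa [real_inner_comm a b, hp, h, Int.cast_one, one_smul] at this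

theorem inner_nonpos_of_sub_notMem {a b : V} (ha : a ∈ RS.Φ) (hb : b ∈ RS.Φ) (hab : a ≠ b)
    (h : a - b ∉ RS.Φ) : ⟪a, b⟫ ≤ 0 :=
  not_lt.1 fun hpos => h (RS.sub_mem_of_inner_pos ha hb hab hpos)

theorem add_mem_of_inner_neg {a b : V} (ha : a ∈ RS.Φ) (hb : b ∈ RS.Φ) (hab : a ≠ -b)
    (hneg : ⟪a, b⟫ < 0) : a + b ∈ RS.Φ := by
  simpa using RS.sub_mem_of_inner_pos ha (RS.neg_mem b hb) hab
    (by rw [inner_neg_right]; linarith)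

/-- With `g = x + y - c`, the inner products `⟪x, c⟫, ⟪y, c⟫, ⟪g, x⟫, ⟪g, y⟫` are all `≤ 0`,
and they add up to `‖x + y‖²`. -/
theorem add_sub_notMem_of_sub_notMem {c x y : V} (hc : c ∈ RS.Φ) (hx : x ∈ RS.Φ) (hy : y ∈ RS.Φ)
    (hxc : x ≠ c) (hyc : y ≠ c) (hxy : x + y ≠ 0) (hxc' : x - c ∉ RS.Φ) (hyc' : y - c ∉ RS.Φ) :
    x + y - c ∉ RS.Φ := by
  intro hg
  have h₁ := RS.inner_nonpos_of_sub_notMem hx hc hxc hxc'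
  have h₂ := RS.inner_nonpos_of_sub_notMem hy hc hyc hyc'
  have h₃ : ⟪x + y - c, x⟫ ≤ 0 := RS.inner_nonpos_of_sub_notMem hg hx
    (fun h => hyc (by linear_combination (norm := module) h))
    (by rwa [show x + y - c - x = y - c by abel])
  have h₄ : ⟪x + y - c, y⟫ ≤ 0 := RS.inner_nonpos_of_sub_notMem hg hy
    (fun h => hxc (by linear_combination (norm := module) h))
    (by rwa [show x + y - c - y = x - c by abel])
  have hsum : ⟪x + y, x + y⟫ = ⟪x + y - c, x⟫ + ⟪x + y - c, y⟫ + ⟪x, c⟫ + ⟪y, c⟫ := by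
    simp only [inner_add_left, inner_sub_left, inner_add_right, real_inner_comm c x,
      real_inner_comm c y]
    ring
  exact hxy (real_inner_self_nonpos.1 (by linarith))

theorem sub_mem_of_sub_nsmul_mem {c β : V} (hc : c ∈ RS.Φ) (hβ : β ∈ RS.Φ) (hβc : β ≠ c)
    {k : ℕ} (hk : 1 ≤ k) (h : β - k • c ∈ RS.Φ) : β - c ∈ RS.Φ := by
  induction k, hk using Nat.le_induction with
  | base => simpa using h
  | succ k hk ih =>
    by_contra hβc'
    have hβ' : ⟪β, c⟫ ≤ 0 := RS.inner_nonpos_of_sub_notMem hβ hc hβc hβc'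
    have hne : β - (k + 1) • c ≠ -c := by
      intro he
      have hβk : β = k • c := by linear_combination (norm := module) he
      have hk1 := RS.eq_one_of_nsmul_mem hc (hβk ▸ hβ)
      exact hβc (by rw [hβk, hk1, one_nsmul])
    have hneg : ⟪β - (k + 1) • c, c⟫ < 0 := by
      have hcc : 0 < ⟪c, c⟫ := real_inner_self_pos.2 (RS.ne_zero_of_mem hc)
      rw [inner_sub_left, ← Nat.cast_smul_eq_nsmul ℝ, real_inner_smul_left]
      push_cast
      nlinarith
    refine hβc' (ih ?_)
    simpa [show β - (k + 1) • c + c = β - k • c by module] using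
      RS.add_mem_of_inner_neg h hc hne hneg

theorem sub_nsmul_mem_of_le {c β : V} (hc : c ∈ RS.Φ) (hβ : β ∈ RS.Φ) (hβc : β ≠ c) {m : ℕ}
    (hm : β - m • c ∈ RS.Φ) {j : ℕ} (hj : j ≤ m) : β - j • c ∈ RS.Φ := by
  induction j with
  | zero => simpa using hβ
  | succ j ih =>
    have hne : β - j • c ≠ c := by
      intro h
      have hβj : β = (j + 1) • c := by linear_combination (norm := module) h
      have hj0 : j = 0 := by have := RS.eq_one_of_nsmul_mem hc (hβj ▸ hβ); omega
      exact hβc (by simpa [hj0] using hβj)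
    obtain ⟨d, rfl⟩ := Nat.exists_eq_add_of_le hj
    have := RS.sub_mem_of_sub_nsmul_mem hc (ih (by omega)) hne (k := d + 1) (by omega)
      (by rwa [show β - j • c - (d + 1) • c = β - (j + 1 + d) • c by module])
    rwa [show β - j • c - c = β - (j + 1) • c by module] at this

/-- Induction on `k`: each further `c` is absorbed by whichever summand can take it; if neither
can, `add_sub_notMem_of_sub_notMem` forces the first summand to be `c`. -/
theorem exists_split_of_forall_sub_nsmul_mem {c r s : V} (hc : c ∈ RS.Φ) (hr : r ∈ RS.Φ)
    (hs : s ∈ RS.Φ) (hsc : ∀ μ : ℤ, s ≠ μ • c) {k : ℕ} (hk : ∀ j ≤ k, r + s - j • c ∈ RS.Φ) :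
    ∃ (k₁ : ℕ) (μ : ℤ), r - k₁ • c ∈ RS.Φ ∧ s + μ • c ∈ RS.Φ ∧
      r + s - k • c = (r - k₁ • c) + (s + μ • c) := by
  induction k with
  | zero => exact ⟨0, 0, by simpa using hr, by simpa using hs, by simp⟩
  | succ k ih =>
    obtain ⟨k₁, μ, hx, hy, hsplit⟩ := ih fun j hj => hk j (by omega)
    have hxy : (r - k₁ • c) + (s + μ • c) - c ∈ RS.Φ := by
      rw [← hsplit, show r + s - k • c - c = r + s - (k + 1) • c by module]
      exact hk _ le_rfl
    by_cases hxc : r - k₁ • c - c ∈ RS.Φ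
    · exact ⟨k₁ + 1, μ, by rwa [show r - (k₁ + 1) • c = r - k₁ • c - c by module],
        hy, by linear_combination (norm := module) hsplit⟩
    by_cases hyc : s + μ • c - c ∈ RS.Φ
    · exact ⟨k₁, μ - 1, hx, by rwa [show s + (μ - 1) • c = s + μ • c - c by module],
        by linear_combination (norm := module) hsplit⟩
    have hyne : s + μ • c ≠ c := fun h => hsc (1 - μ) (by linear_combination (norm := module) h)
    have hne0 : (r - k₁ • c) + (s + μ • c) ≠ 0 := by
      rw [← hsplit]; exact RS.ne_zero_of_mem (hk k (by omega))
    have hxe : r - k₁ • c = c := by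
      by_contra hne
      exact RS.add_sub_notMem_of_sub_notMem hc hx hy hne hyne hne0 hxc hyc hxy
    have hk₁ : k₁ = 0 := by
      have := RS.eq_one_of_nsmul_mem hc (k := k₁ + 1)
        (by rwa [show (k₁ + 1) • c = r by linear_combination (norm := module) -hxe])
      omega
    obtain rfl : r = c := by simpa [hk₁] using hxe
    refine ⟨2, 1 - k, by simpa [two_nsmul] using RS.neg_mem r hc, ?_, by module⟩
    rw [show s + (1 - (k : ℤ)) • r = r + s - k • r by module]
    exact hk k (by omega)

theorem exists_split_sub_nsmul {c r s : V} (hc : c ∈ RS.Φ) (hr : r ∈ RS.Φ) (hs : s ∈ RS.Φ)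
    (hsc : ∀ μ : ℤ, s ≠ μ • c) (hrs : r + s ∈ RS.Φ) {k : ℕ} (hk : r + s - k • c ∈ RS.Φ) :
    ∃ (k₁ : ℕ) (μ : ℤ), r - k₁ • c ∈ RS.Φ ∧ s + μ • c ∈ RS.Φ ∧
      r + s - k • c = (r - k₁ • c) + (s + μ • c) := by
  by_cases hrsc : r + s = c
  · have hk' : k = 0 ∨ k = 2 := by
      have := RS.eq_one_or_neg_one_of_zsmul_mem hc (m := 1 - k)
        (by rwa [show ((1 : ℤ) - k) • c = r + s - k • c by rw [← hrsc]; module])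
      omega
    obtain rfl | rfl := hk'
    · exact ⟨0, 0, by simpa using hr, by simpa using hs, by simp⟩
    · refine ⟨1, -1, ?_, ?_, by module⟩
      · simpa [← hrsc] using RS.neg_mem s hs
      · simpa [← hrsc, sub_eq_add_neg] using RS.neg_mem r hr
  · exact RS.exists_split_of_forall_sub_nsmul_mem hc hr hs hsc
      fun j hj => RS.sub_nsmul_mem_of_le hc hrs hrsc hk hj

theorem exists_shifted_path {c : V} (hc : c ∈ RS.Φ) (n : ℕ) (x : V) (s : ℕ → V) (k : ℕ)
    (hpath : ∀ i ≤ n, x - ∑ t ∈ range i, s t ∈ RS.Φ)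
    (hs : ∀ t < n, s t ∈ RS.Φ ∧ ∀ μ : ℤ, s t ≠ μ • c)
    (hend : x - ∑ t ∈ range n, s t - c ∉ RS.Φ) (hendc : x - ∑ t ∈ range n, s t ≠ c)
    (hk : x - k • c ∈ RS.Φ) :
    ∃ s' : ℕ → V, (∀ t < n, s' t ∈ RS.Φ ∧ ∃ μ : ℤ, s' t = s t + μ • c) ∧
      (∀ i ≤ n, x - k • c - ∑ t ∈ range i, s' t ∈ RS.Φ) ∧
      x - k • c - ∑ t ∈ range n, s' t = x - ∑ t ∈ range n, s t := by
  induction n generalizing x s k with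
  | zero =>
    have hx : x ∈ RS.Φ := by simpa using hpath 0 le_rfl
    obtain rfl : k = 0 := by
      by_contra hk0
      have := RS.sub_nsmul_mem_of_le hc hx (by simpa using hendc) hk
        (Nat.one_le_iff_ne_zero.2 hk0)
      exact hend (by simpa using this)
    exact ⟨s, by simp, by simpa using hpath, by simp⟩
  | succ n ih =>
    have htail : ∀ i ≤ n, x - s 0 - ∑ t ∈ range i, s (t + 1) ∈ RS.Φ := fun i hi => by
      simpa [sum_range_succ', sub_add_eq_sub_sub_swap] using hpath (i + 1) (by omega)
    obtain ⟨k₁, μ, hr, hw, hsplit⟩ := RS.exists_split_sub_nsmul hc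
      (by simpa using htail 0 (by omega)) (hs 0 (by omega)).1 (hs 0 (by omega)).2
      (by simpa using hpath 0 (by omega))
      (k := k) (by simpa using hk)
    rw [sub_add_cancel] at hsplit
    have hhead : x - k • c - (s 0 + μ • c) = x - s 0 - k₁ • c := by
      linear_combination (norm := module) hsplit
    obtain ⟨s'', hs'', hpath'', hend''⟩ := ih (x - s 0) (fun t => s (t + 1)) k₁ htail
      (fun t ht => hs (t + 1) (by omega))
      (by simpa [sum_range_succ', sub_add_eq_sub_sub_swap] using hend)
      (by simpa [sum_range_succ', sub_add_eq_sub_sub_swap] using hendc) hr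
    refine ⟨fun | 0 => s 0 + μ • c | t + 1 => s'' t, fun t ht => ?_, fun i hi => ?_, ?_⟩
    · cases t with
      | zero => exact ⟨hw, μ, rfl⟩
      | succ t => exact hs'' t (by omega)
    · cases i with
      | zero => simpa using hk
      | succ i =>
        rw [sum_range_succ', add_comm, ← sub_sub, hhead]
        exact hpath'' i (by omega)
    · rw [sum_range_succ', add_comm, ← sub_sub, hhead, hend'', sum_range_succ' s, add_comm,
        ← sub_sub]

variable {RS}

theorem proj_eq_zero_of_mem_sdiff {J : Finset V} {e : V} (he : e ∈ RS.base) (heJ : e ∉ J) :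
    RS.proj J e = 0 :=
  (Submodule.Quotient.mk_eq_zero _).2 (Submodule.subset_span ⟨he, heJ⟩)

theorem proj_eq_zero_of_mem_closure {J : Finset V} {v : V}
    (hv : v ∈ AddSubmonoid.closure ((RS.base : Set V) \ J)) : RS.proj J v = 0 :=
  AddSubmonoid.closure_le (S := (LinearMap.ker (RS.proj J)).toAddSubmonoid).2
    (fun _ he => proj_eq_zero_of_mem_sdiff he.1 he.2) hv

theorem proj_sum_nsmul_eq_zero_iff {J : Finset V} (hJ : J ⊆ RS.base) (κ : V → ℕ) :
    RS.proj J (∑ e ∈ RS.base, κ e • e) = 0 ↔ ∀ e ∈ J, κ e = 0 := by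
  classical
  constructor
  · intro h
    have hmem : ∑ e ∈ RS.base, κ e • e ∈ Submodule.span ℝ (↑(RS.base \ J) : Set V) := by
      rw [coe_sdiff]; exact (Submodule.Quotient.mk_eq_zero _).1 h
    obtain ⟨f, hf, hsum⟩ := Submodule.mem_span_finset.1 hmem
    have hf0 : ∀ e ∉ RS.base \ J, f e = 0 := fun e he => Function.notMem_support.1 (he ∘ (hf ·))
    rw [sum_subset sdiff_subset fun e _ he => by rw [hf0 e he, zero_smul]] at hsum
    have hzero : ∑ e ∈ RS.base, ((κ e : ℝ) - f e) • e = 0 := by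
      simp only [sub_smul, sum_sub_distrib, Nat.cast_smul_eq_nsmul, hsum, sub_self]
    intro e heJ
    have hindep : LinearIndepOn ℝ id (RS.base : Set V) := RS.base_indep
    have := linearIndepOn_iff'.1 hindep RS.base _ subset_rfl hzero e (hJ heJ)
    rw [hf0 e fun he => (mem_sdiff.1 he).2 heJ, sub_zero] at this
    exact_mod_cast this
  · intro h
    refine (Submodule.Quotient.mk_eq_zero _).2 (Submodule.sum_mem _ fun e he => ?_)
    by_cases heJ : e ∈ J
    · simp [h e heJ]
    · exact Submodule.smul_of_tower_mem _ _ (Submodule.subset_span ⟨he, heJ⟩)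

theorem IsPos.proj_eq_zero_of_proj_add_eq_zero {J : Finset V} (hJ : J ⊆ RS.base) {u v : V}
    (hu : RS.IsPos u) (hv : RS.IsPos v) (h : RS.proj J (u + v) = 0) : RS.proj J u = 0 := by
  obtain ⟨κ, rfl⟩ := hu
  obtain ⟨μ, rfl⟩ := hv
  rw [← sum_add_distrib, ← sum_congr rfl fun e _ => add_nsmul e (κ e) (μ e)] at h
  rw [proj_sum_nsmul_eq_zero_iff hJ] at h ⊢
  exact fun e he => Nat.eq_zero_of_add_eq_zero_right (h e he)

theorem IsPos.mem_closure_of_proj_eq_zero {J : Finset V} (hJ : J ⊆ RS.base) {v : V}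
    (hv : RS.IsPos v) (h : RS.proj J v = 0) :
    v ∈ AddSubmonoid.closure ((RS.base : Set V) \ J) := by
  obtain ⟨κ, rfl⟩ := hv
  rw [proj_sum_nsmul_eq_zero_iff hJ] at h
  refine AddSubmonoid.sum_mem _ fun e he => ?_
  by_cases heJ : e ∈ J
  · simp [h e heJ]
  · have he' : e ∈ (RS.base : Set V) \ J := ⟨he, heJ⟩
    exact AddSubmonoid.nsmul_mem _ (AddSubmonoid.subset_closure he') _

theorem isPos_of_proj_eq {J : Finset V} (hJ : J ⊆ RS.base) {r s : V} (hs : RS.IsPos s)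
    (hs0 : RS.proj J s ≠ 0) (hr : r ∈ RS.Φ) (h : RS.proj J r = RS.proj J s) : RS.IsPos r := by
  refine (RS.base_gen r hr).resolve_right fun hneg => hs0 ?_
  exact hs.proj_eq_zero_of_proj_add_eq_zero hJ hneg (by rw [← sub_eq_add_neg, map_sub, h, sub_self])

theorem IsHighest.proj_ne_zero {J : Finset V} (hJ : J ⊆ RS.base) {atil r : V}
    (hatil : RS.IsHighest atil) (hr : r ∈ RS.Φ) (hr0 : RS.proj J r ≠ 0) :
    RS.proj J atil ≠ 0 := by
  intro h0
  have key : ∀ p ∈ RS.Φ, RS.IsPos p → RS.proj J p = 0 := fun p hp hpos =>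
    hpos.proj_eq_zero_of_proj_add_eq_zero hJ (hatil.2 p hp) (by rwa [add_sub_cancel])
  rcases RS.base_gen r hr with hpos | hneg
  · exact hr0 (key r hr hpos)
  · exact hr0 (by simpa using key (-r) (RS.neg_mem r hr) hneg)

variable (RS) in
def DescendsTo (J : Finset V) (n : ℕ) (a : ℕ → V) (b x : V) : Prop :=
  ∃ a' : ℕ → V,
    (∀ t < n, a' t ∈ RS.Φ ∧ RS.IsPos (a' t) ∧ RS.proj J (a' t) = RS.proj J (a t)) ∧
    x - ∑ t ∈ range n, a' t = b ∧
    ∀ i ≤ n, x - ∑ t ∈ range i, a' t ∈ RS.Φ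

section DescendsTo

variable {J : Finset V} {n : ℕ} {a : ℕ → V} {b x : V}

theorem DescendsTo.mem (hx : RS.DescendsTo J n a b x) : x ∈ RS.Φ := by
  obtain ⟨_, _, _, hpath⟩ := hx
  simpa using hpath 0 (Nat.zero_le n)

theorem DescendsTo.sub_simple (hJ : J ⊆ RS.base) (ha : ∀ t < n, RS.proj J (a t) ≠ 0)
    (hbnz : RS.proj J b ≠ 0) (hbmin : RS.IsMinimalIn {x | x ∈ RS.Φ ∧ RS.proj J x = RS.proj J b} b)
    (hx : RS.DescendsTo J n a b x) {c : V} (hc : c ∈ RS.base) (hcJ : RS.proj J c = 0)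
    (hxc : x - c ∈ RS.Φ) : RS.DescendsTo J n a b (x - c) := by
  obtain ⟨a', ha', hend, hpath⟩ := hx
  have hshift : ∀ (v : V) (μ : ℤ), RS.proj J (v + μ • c) = RS.proj J v := by simp [hcJ]
  obtain ⟨s', hs', hpath', hend'⟩ := RS.exists_shifted_path (RS.base_sub hc) n x a' 1 hpath
    (fun t ht => ⟨(ha' t ht).1, fun μ hμ => ha t ht (by
      rw [← (ha' t ht).2.2, hμ, ← zero_add (μ • c), hshift, map_zero])⟩)
    (by rw [hend]; exact fun h => hbmin.2 c hc ⟨h, by simp [hcJ]⟩)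
    (by rw [hend]; rintro rfl; exact hbnz hcJ)
    (by rwa [one_nsmul])
  rw [one_nsmul] at hpath' hend'
  refine ⟨s', fun t ht => ?_, hend'.trans hend, hpath'⟩
  obtain ⟨hs'Φ, μ, hμ⟩ := hs' t ht
  obtain ⟨ha'Φ, ha'pos, ha'proj⟩ := ha' t ht
  have hproj : RS.proj J (s' t) = RS.proj J (a' t) := by rw [hμ, hshift]
  exact ⟨hs'Φ, isPos_of_proj_eq hJ ha'pos (ha'proj ▸ ha t ht) hs'Φ hproj, hproj.trans ha'proj⟩

/-- Peel off the simple roots of `x - y` one at a time, always one with `⟪e, x - y⟫ > 0`: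
then either `⟪e, x⟫ > 0`, and the top moves down to `x - e`, or `⟪e, y⟫ < 0`, and the bottom
moves up to `y + e`. -/
theorem DescendsTo.of_sub_mem_closure (hJ : J ⊆ RS.base) (ha : ∀ t < n, RS.proj J (a t) ≠ 0)
    (hbnz : RS.proj J b ≠ 0) (hbmin : RS.IsMinimalIn {x | x ∈ RS.Φ ∧ RS.proj J x = RS.proj J b} b)
    {y : V} (hx : RS.DescendsTo J n a b x) (hx0 : RS.proj J x ≠ 0) (hy : y ∈ RS.Φ)
    (hxy : x - y ∈ AddSubmonoid.closure ((RS.base : Set V) \ J)) : RS.DescendsTo J n a b y := by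
  classical
  obtain ⟨l, hl, hsum⟩ := AddSubmonoid.exists_multiset_of_mem_closure hxy
  clear hxy
  induction l using Multiset.strongInductionOn generalizing x y with
  | ih l ih =>
    by_cases hxy : x = y
    · exact hxy ▸ hx
    obtain ⟨e, hel, hpos⟩ := exists_mem_inner_multiset_sum_pos (hsum ▸ sub_ne_zero.2 hxy)
    obtain ⟨heb, heJ⟩ := hl e hel
    have he0 : RS.proj J e = 0 := proj_eq_zero_of_mem_sdiff heb heJ
    have hl' : ∀ v ∈ l.erase e, v ∈ (RS.base : Set V) \ J := fun v hv =>
      hl v (Multiset.mem_of_mem_erase hv)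
    have hrest : x - y = e + (l.erase e).sum := by rw [← hsum, Multiset.sum_erase hel]
    rw [hsum, inner_sub_right] at hpos
    rcases lt_or_ge 0 ⟪e, x⟫ with hex | hex
    · have hxe : x - e ∈ RS.Φ := RS.sub_mem_of_inner_pos hx.mem (RS.base_sub heb)
        (by rintro rfl; exact hx0 he0) (by rwa [real_inner_comm])
      exact ih _ (Multiset.erase_lt.2 hel) (hx.sub_simple hJ ha hbnz hbmin heb he0 hxe)
        (by rwa [map_sub, he0, sub_zero]) hy hl'
        (by rw [sub_right_comm, hrest, add_sub_cancel_left])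
    · have hyx : RS.proj J y = RS.proj J x := by
        rw [eq_comm, ← sub_eq_zero, ← map_sub, ← hsum]
        exact proj_eq_zero_of_mem_closure (AddSubmonoid.multiset_sum_mem _ l
          fun v hv => AddSubmonoid.subset_closure (hl v hv))
      have hye : y + e ∈ RS.Φ := RS.add_mem_of_inner_neg hy (RS.base_sub heb)
        (by rintro rfl; exact hx0 (by rw [← hyx, map_neg, he0, neg_zero]))
        (by rw [real_inner_comm]; linarith)
      have := ih _ (Multiset.erase_lt.2 hel) hx hx0 hye hl' (by rw [← sub_sub, hrest]; abel)
      simpa using this.sub_simple hJ ha hbnz hbmin heb he0 (by simpa using hy)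

end DescendsTo

end RootSystemData

open RootSystemData in
theorem stmt10_general {V : Type} [NormedAddCommGroup V] [InnerProductSpace ℝ V]
    (RS : RootSystemData V)
    (J : Finset V) (hJ : J ⊆ RS.base)
    (atil : V) (hatil : RS.IsHighest atil)
    (n : ℕ) (a : ℕ → V)
    (ha : ∀ t < n, a t ∈ RS.Φ ∧ RS.IsPos (a t) ∧ RS.proj J (a t) ≠ 0)
    (hpart : ∀ i ≤ n, atil - ∑ t ∈ Finset.range i, a t ∈ RS.Φ)
    (b : V) (hb : b = atil - ∑ t ∈ Finset.range n, a t)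
    (hbnz : RS.proj J b ≠ 0)
    (hbmin : RS.IsMinimalIn {x | x ∈ RS.Φ ∧ RS.proj J x = RS.proj J b} b)
    (a₀ : V) (ha₀ : a₀ ∈ RS.Φ) (hπ : RS.proj J a₀ = RS.proj J atil) :
    ∃ a' : ℕ → V,
      (∀ t < n, a' t ∈ RS.Φ ∧ RS.IsPos (a' t) ∧ RS.proj J (a' t) = RS.proj J (a t)) ∧
      a₀ - ∑ t ∈ Finset.range n, a' t = b ∧
      ∀ i ≤ n, a₀ - ∑ t ∈ Finset.range i, a' t ∈ RS.Φ := by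
  have hatil0 : RS.proj J atil ≠ 0 := hatil.proj_ne_zero hJ (hb ▸ hpart n le_rfl) hbnz
  have hdesc : RS.DescendsTo J n a b atil :=
    ⟨a, fun t ht => ⟨(ha t ht).1, (ha t ht).2.1, rfl⟩, hb.symm, hpart⟩
  have hclosure : atil - a₀ ∈ AddSubmonoid.closure ((RS.base : Set V) \ J) :=
    IsPos.mem_closure_of_proj_eq_zero hJ (hatil.2 a₀ ha₀) (by rw [map_sub, hπ, sub_self])
  exact hdesc.of_sub_mem_closure hJ (fun t ht => (ha t ht).2.2) hbnz hbmin hatil0 ha₀ hclosure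

open RootSystemData in
theorem stmt10 {V : Type} [NormedAddCommGroup V] [InnerProductSpace ℝ V]
    (RS : RootSystemData V) (hirr : RS.Irred)
    (J : Finset V) (hJ : J ⊆ RS.base)
    (atil : V) (hatil : RS.IsHighest atil)
    (n : ℕ) (a : ℕ → V)
    (ha : ∀ t < n, a t ∈ RS.Φ ∧ RS.IsPos (a t) ∧ RS.proj J (a t) ≠ 0)
    (hpart : ∀ i ≤ n, atil - ∑ t ∈ Finset.range i, a t ∈ RS.Φ)
    (b : V) (hb : b = atil - ∑ t ∈ Finset.range n, a t)
    (hbnz : RS.proj J b ≠ 0)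
    (hbmin : RS.IsMinimalIn {x | x ∈ RS.Φ ∧ RS.proj J x = RS.proj J b} b)
    (a₀ : V) (ha₀ : a₀ ∈ RS.Φ) (hπ : RS.proj J a₀ = RS.proj J atil)
    (hcomp : ∃ S : Set V, RS.IsComponent S ∧ a₀ ∈ S ∧ atil ∈ S) :
    ∃ a' : ℕ → V,
      (∀ t < n, a' t ∈ RS.Φ ∧ RS.IsPos (a' t) ∧ RS.proj J (a' t) = RS.proj J (a t)) ∧
      a₀ - ∑ t ∈ Finset.range n, a' t = b ∧
      ∀ i ≤ n, a₀ - ∑ t ∈ Finset.range i, a' t ∈ RS.Φ :=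
  stmt10_general RS J hJ atil hatil n a ha hpart b hb hbnz hbmin a₀ ha₀ hπ
end

section
/- Let G be a topological group, Δ a dense subgroup of G, and C a closed subgroup of G. Suppose K ⊆ G is a compact subset with C·K = G (every element of G is a product of an element of C and an element of K), and that K ⊆ Δ. Then C ∩ Δ is dense in C. -/
/-! Every `δ ∈ Δ` factors as `δ = c * k` with `k ∈ K ⊆ Δ`, so `c = δ * k⁻¹ ∈ C ∩ Δ`; hence
`Δ ⊆ (C ∩ Δ) * K ⊆ H * K`, where `H` is the closure of `C ∩ Δ`. Since `H` is closed and `K` is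
compact, `H * K` is closed, so density of `Δ` gives `G = H * K`. Writing `c ∈ C` as `c = h * k`,
we get `h ∈ H ⊆ C`, hence `k = h⁻¹ * c ∈ C ∩ Δ ⊆ H` and `c ∈ H`. -/

open scoped Pointwise

namespace Subgroup

variable {G : Type*} [Group G]

theorem coe_subset_inf_mul {Δ C : Subgroup G} {K : Set G} (hKΔ : K ⊆ Δ)
    (hCK : (Δ : Set G) ⊆ (C : Set G) * K) : (Δ : Set G) ⊆ ((C ⊓ Δ : Subgroup G) : Set G) * K := by
  rintro δ hδ
  obtain ⟨c, hc, k, hk, rfl⟩ := hCK hδ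
  have hcΔ : c ∈ Δ := by simpa using Δ.mul_mem hδ (Δ.inv_mem (hKΔ hk))
  exact ⟨c, ⟨hc, hcΔ⟩, k, hk, rfl⟩

variable [TopologicalSpace G] [IsTopologicalGroup G]

theorem topologicalClosure_inf_mul_eq_univ {Δ C : Subgroup G} {K : Set G}
    (hΔ : Dense (Δ : Set G)) (hK : IsCompact K) (hKΔ : K ⊆ Δ) (hCK : (Δ : Set G) ⊆ (C : Set G) * K) :
    ((C ⊓ Δ).topologicalClosure : Set G) * K = Set.univ := by
  have hclosed : IsClosed (((C ⊓ Δ).topologicalClosure : Set G) * K) :=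
    (C ⊓ Δ).isClosed_topologicalClosure.mul_right_of_isCompact hK
  refine Set.eq_univ_of_univ_subset (hΔ.closure_eq ▸ hclosed.closure_subset_iff.mpr ?_)
  exact (coe_subset_inf_mul hKΔ hCK).trans
    (Set.mul_subset_mul_right (C ⊓ Δ).le_topologicalClosure)

theorem le_topologicalClosure_inf {Δ C : Subgroup G} {K : Set G}
    (hΔ : Dense (Δ : Set G)) (hC : IsClosed (C : Set G)) (hK : IsCompact K) (hKΔ : K ⊆ Δ)
    (hCK : (Δ : Set G) ⊆ (C : Set G) * K) : C ≤ (C ⊓ Δ).topologicalClosure := by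
  intro c hc
  obtain ⟨h, hh, k, hk, rfl⟩ :
      c ∈ ((C ⊓ Δ).topologicalClosure : Set G) * K := by
    rw [topologicalClosure_inf_mul_eq_univ hΔ hK hKΔ hCK]; trivial
  have hhC : h ∈ C := (C ⊓ Δ).topologicalClosure_minimal inf_le_left hC hh
  have hkC : k ∈ C := by simpa using C.mul_mem (C.inv_mem hhC) hc
  exact mul_mem hh ((C ⊓ Δ).le_topologicalClosure ⟨hkC, hKΔ hk⟩)

end Subgroup

theorem stmt17 {G : Type*} [Group G] [TopologicalSpace G] [IsTopologicalGroup G]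
    (Δ C : Subgroup G)
    (hΔ : Dense (Δ : Set G)) (hC : IsClosed (C : Set G))
    (K : Set G) (hK : IsCompact K) (hKΔ : K ⊆ (Δ : Set G))
    (hCK : ∀ g : G, ∃ c ∈ C, ∃ k ∈ K, g = c * k) :
    (C : Set G) ⊆ closure ((C : Set G) ∩ (Δ : Set G)) := by
  have hΔCK : (Δ : Set G) ⊆ (C : Set G) * K := fun g _ => by
    obtain ⟨c, hc, k, hk, rfl⟩ := hCK g
    exact ⟨c, hc, k, hk, rfl⟩
  exact Subgroup.le_topologicalClosure_inf hΔ hC hK hKΔ hΔCK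
end

section
/- Let R be a commutative ring, V a finitely generated faithfully projective R-module, and M ⊆ V a submodule that is invariant under all R-linear endomorphisms of V (i.e., f(M) ⊆ M for every f ∈ End_R(V)). Then there exists an ideal I of R such that M = I·V. -/
/-!
Take `I` to be the annihilator of `V ⧸ M`; clearly `I • V ≤ M`. Conversely, a projective module
has a dual basis `x = ∑ φᵢ(x) • vᵢ`, and for `m ∈ M` every coefficient `φ(m)` lies in `I`, since
`φ(m) • v` is the image of `m` under the endomorphism `φ(-) • v`.
-/

namespace Submodule

theorem colon_univ_smul_top_le {R V : Type*} [Semiring R] [AddCommMonoid V] [Module R V]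
    (M : Submodule R V) : M.colon Set.univ • (⊤ : Submodule R V) ≤ M :=
  smul_le.2 fun _ hr v _ => mem_colon.1 hr v trivial

theorem apply_mem_colon_univ_of_forall_map_le {R V : Type*} [CommSemiring R] [AddCommMonoid V]
    [Module R V] {M : Submodule R V} (hM : ∀ f : V →ₗ[R] V, M.map f ≤ M) (φ : V →ₗ[R] R)
    {m : V} (hm : m ∈ M) : φ m ∈ M.colon Set.univ :=
  mem_colon.2 fun v _ => hM (φ.smulRight v) ⟨m, hm, rfl⟩

end Submodule

theorem Module.Projective.mem_smul_top_of_forall_dual_mem {R P : Type*} [Semiring R]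
    [AddCommMonoid P] [Module R P] [Module.Projective R P] (I : Ideal R) {x : P}
    (hx : ∀ φ : P →ₗ[R] R, φ x ∈ I) : x ∈ I • (⊤ : Submodule R P) := by
  obtain ⟨s, hs⟩ := Module.projective_def'.1 ‹Module.Projective R P›
  have hsum : (s x).sum (fun v c => c • v) = x := by
    simpa [Finsupp.linearCombination_apply] using LinearMap.congr_fun hs x
  rw [← hsum]
  exact Submodule.finsuppSum_mem _ _ _ _ fun v _ =>
    Submodule.smul_mem_smul (hx (Finsupp.lapply v ∘ₗ s)) trivial

theorem stmt19_general {R V : Type*} [CommRing R] [AddCommGroup V] [Module R V]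
    [Module.Projective R V]
    (M : Submodule R V)
    (hM : ∀ f : V →ₗ[R] V, M.map f ≤ M) :
    ∃ I : Ideal R, M = I • (⊤ : Submodule R V) :=
  ⟨M.colon Set.univ, le_antisymm
    (fun _ hm => Module.Projective.mem_smul_top_of_forall_dual_mem _ fun φ =>
      Submodule.apply_mem_colon_univ_of_forall_map_le hM φ hm)
    M.colon_univ_smul_top_le⟩

theorem stmt19 {R V : Type*} [CommRing R] [AddCommGroup V] [Module R V]
    [Module.Finite R V] [Module.Projective R V] [FaithfulSMul R V]
    (M : Submodule R V)
    (hM : ∀ f : V →ₗ[R] V, M.map f ≤ M) :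
    ∃ I : Ideal R, M = I • (⊤ : Submodule R V) :=
  stmt19_general M hM
end
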